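/- arXiv:2110.10244 — 2 statements merged into one kernel-verified Lean document; each statement's English description precedes it below -/
import Mathlib

section
/- Let k'/k be a quadratic field extension and f a homogeneous polynomial over k. If over k' there exist a subspace Q of quadrics of dimension r_2 and a subspace P of linear forms of dimension r_1 with f ∈ (Q, P), then over k there exist such subspaces of dimensions 2r_2 and 2r_1 respectively with f in the generated ideal. -/
open MvPolynomial

/-!
Fix a `k`-basis `(b_t)` of `k'` and a `k`-linear retraction `φ : k' → k` of the inclusion.
Applying `φ` to every coefficient is linear over `k[x]`, so a relation `f = ∑ c_g g` over `k'`
descends to `f = ∑_{g,t} φ(c_g b_t) g_t`, where `g = ∑_t b_t g_t` splits each generator into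
components over `k`. These components have the degree of `g`, and there are `[k' : k] = 2`
of them per generator.
-/

lemma Set.iUnion_image_range_eq_range_finProdFinEquiv {α β : Type*} {m r : ℕ}
    (g : Fin m → α → β) (v : Fin r → α) :
    ⋃ t, g t '' Set.range v =
      Set.range fun i => g (finProdFinEquiv.symm i).1 (v (finProdFinEquiv.symm i).2) := by
  ext y
  simp only [Set.mem_iUnion, Set.mem_image, Set.mem_range]
  constructor
  · rintro ⟨t, _, ⟨j, rfl⟩, rfl⟩
    exact ⟨finProdFinEquiv (t, j), by simp⟩
  · rintro ⟨i, rfl⟩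
    exact ⟨_, _, ⟨_, rfl⟩, rfl⟩

namespace MvPolynomial

variable {k k' σ : Type*} [Field k] [Field k'] [Algebra k k']

noncomputable def coeffwise (φ : k' →ₗ[k] k) : MvPolynomial σ k' →+ MvPolynomial σ k :=
  AddMonoidAlgebra.coeffAddEquiv.symm.toAddMonoidHom.comp
    ((Finsupp.mapRange.addMonoidHom φ.toAddMonoidHom).comp
      AddMonoidAlgebra.coeffAddEquiv.toAddMonoidHom)

@[simp]
lemma coeff_coeffwise (φ : k' →ₗ[k] k) (p : MvPolynomial σ k') (m : σ →₀ ℕ) :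
    coeff m (coeffwise φ p) = φ (coeff m p) := rfl

lemma IsHomogeneous.coeffwise {p : MvPolynomial σ k'} {n : ℕ} (hp : p.IsHomogeneous n)
    (φ : k' →ₗ[k] k) : (coeffwise φ p).IsHomogeneous n := fun m hm =>
  hp fun h0 => hm (by rw [coeff_coeffwise, h0, map_zero])

lemma coeffwise_map {φ : k' →ₗ[k] k} (hφ : ∀ c, φ (algebraMap k k' c) = c)
    (f : MvPolynomial σ k) : coeffwise φ (map (algebraMap k k') f) = f := by
  ext m
  rw [coeff_coeffwise, coeff_map, hφ]

lemma coeffwise_mul_map [DecidableEq σ] (φ : k' →ₗ[k] k) (g : MvPolynomial σ k')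
    (q : MvPolynomial σ k) : coeffwise φ (g * map (algebraMap k k') q) = coeffwise φ g * q := by
  ext m
  simp only [coeff_coeffwise, coeff_mul, coeff_map, map_sum]
  refine Finset.sum_congr rfl fun x _ => ?_
  rw [mul_comm, ← Algebra.smul_def, map_smul, smul_eq_mul, mul_comm]

variable {ι : Type*} [Fintype ι] (b : Module.Basis ι k k')

lemma sum_C_basis_mul_map_coeffwise_coord (g : MvPolynomial σ k') :
    ∑ t, C (b t) * map (algebraMap k k') (coeffwise (b.coord t) g) = g := by
  ext m
  conv_rhs => rw [← b.sum_repr (coeff m g)]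
  simp only [coeff_sum, coeff_C_mul, coeff_map, coeff_coeffwise, Module.Basis.coord_apply,
    Algebra.smul_def, mul_comm]

lemma coeffwise_mul_mem_span_coeffwise_coord (φ : k' →ₗ[k] k) (a g : MvPolynomial σ k') :
    coeffwise φ (a * g) ∈ Ideal.span (Set.range fun t => coeffwise (b.coord t) g) := by
  classical
  have hsplit : a * g = ∑ t, a * C (b t) * map (algebraMap k k') (coeffwise (b.coord t) g) := by
    simp only [mul_assoc, ← Finset.mul_sum, sum_C_basis_mul_map_coeffwise_coord]
  rw [hsplit, map_sum]
  simp only [coeffwise_mul_map]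
  exact Ideal.sum_mem _ fun t _ => Ideal.mul_mem_left _ _ (Ideal.subset_span ⟨t, rfl⟩)

lemma coeffwise_mem_span_of_mem_span (φ : k' →ₗ[k] k) {S : Set (MvPolynomial σ k')}
    {x : MvPolynomial σ k'} (hx : x ∈ Ideal.span S) :
    coeffwise φ x ∈ Ideal.span (⋃ t, coeffwise (b.coord t) '' S) := by
  -- `coeffwise φ` is not `k'[x]`-linear, so the induction must carry an arbitrary multiplier.
  suffices ∀ a, coeffwise φ (a * x) ∈ Ideal.span (⋃ t, coeffwise (b.coord t) '' S) by
    simpa using this 1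
  induction hx using Submodule.span_induction with
  | mem g hg =>
    refine fun a => Ideal.span_mono ?_ (coeffwise_mul_mem_span_coeffwise_coord b φ a g)
    rintro _ ⟨t, rfl⟩
    exact Set.mem_iUnion.mpr ⟨t, g, hg, rfl⟩
  | zero => simp
  | add y z _ _ hy hz =>
    exact fun a => by rw [mul_add, map_add]; exact Ideal.add_mem _ (hy a) (hz a)
  | smul c y _ hy =>
    exact fun a => by rw [smul_eq_mul, ← mul_assoc]; exact hy (a * c)

theorem mem_span_of_map_mem_span {S : Set (MvPolynomial σ k')} {f : MvPolynomial σ k}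
    (hf : map (algebraMap k k') f ∈ Ideal.span S) :
    f ∈ Ideal.span (⋃ t, coeffwise (b.coord t) '' S) := by
  obtain ⟨φ, hφ⟩ := (Algebra.linearMap k k').exists_leftInverse_of_injective
    (LinearMap.ker_eq_bot.mpr (algebraMap k k').injective)
  have hφ' (c : k) : φ (algebraMap k k' c) = c := LinearMap.congr_fun hφ c
  simpa only [coeffwise_map hφ'] using coeffwise_mem_span_of_mem_span b φ hf

end MvPolynomial

theorem schmidt_rank_quadratic_descent_general {k k' : Type*} [Field k] [Field k'] [Algebra k k']
    (hdeg : Module.finrank k k' = 2)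
    {n : ℕ} (f : MvPolynomial (Fin n) k)
    {r₂ r₁ : ℕ}
    (h : ∃ (Q : Fin r₂ → MvPolynomial (Fin n) k') (P : Fin r₁ → MvPolynomial (Fin n) k'),
      (∀ i, (Q i).IsHomogeneous 2) ∧ (∀ i, (P i).IsHomogeneous 1) ∧
        MvPolynomial.map (algebraMap k k') f ∈ Ideal.span (Set.range Q ∪ Set.range P)) :
    ∃ (Q : Fin (2 * r₂) → MvPolynomial (Fin n) k) (P : Fin (2 * r₁) → MvPolynomial (Fin n) k),
      (∀ i, (Q i).IsHomogeneous 2) ∧ (∀ i, (P i).IsHomogeneous 1) ∧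
        f ∈ Ideal.span (Set.range Q ∪ Set.range P) := by
  obtain ⟨Q, P, hQ, hP, hmem⟩ := h
  have : Module.Finite k k' := Module.finite_of_finrank_eq_succ hdeg
  let b : Module.Basis (Fin 2) k k' := Module.finBasisOfFinrankEq k k' hdeg
  have hdescent := mem_span_of_map_mem_span b hmem
  simp only [Set.image_union, Set.iUnion_union_distrib,
    Set.iUnion_image_range_eq_range_finProdFinEquiv] at hdescent
  exact ⟨_, _, fun i => (hQ _).coeffwise _, fun i => (hP _).coeffwise _, hdescent⟩

/-- Let `k'/k` be a quadratic (degree-2 Galois) field extension and `f` a homogeneous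
polynomial over `k`.  If over `k'` the polynomial `f` lies in the ideal generated by
`r₂` quadrics and `r₁` linear forms, then over `k` it lies in the ideal generated by
`2r₂` quadrics and `2r₁` linear forms. -/
theorem schmidt_rank_quadratic_descent {k k' : Type*} [Field k] [Field k'] [Algebra k k']
    [IsGalois k k'] (hdeg : Module.finrank k k' = 2)
    {n d : ℕ} (f : MvPolynomial (Fin n) k) (hf : f.IsHomogeneous d)
    {r₂ r₁ : ℕ}
    (h : ∃ (Q : Fin r₂ → MvPolynomial (Fin n) k') (P : Fin r₁ → MvPolynomial (Fin n) k'),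
      (∀ i, (Q i).IsHomogeneous 2) ∧ (∀ i, (P i).IsHomogeneous 1) ∧
        MvPolynomial.map (algebraMap k k') f ∈ Ideal.span (Set.range Q ∪ Set.range P)) :
    ∃ (Q : Fin (2 * r₂) → MvPolynomial (Fin n) k) (P : Fin (2 * r₁) → MvPolynomial (Fin n) k),
      (∀ i, (Q i).IsHomogeneous 2) ∧ (∀ i, (P i).IsHomogeneous 1) ∧
        f ∈ Ideal.span (Set.range Q ∪ Set.range P) :=
  schmidt_rank_quadratic_descent_general hdeg f h
end

section
/- Let E/k be Galois with group G, and suppose q, q' are quadrics over E and P a subspace of linear forms such that qq' ≡ σ(q)σ(q') mod (P + σ(P)) for some σ ∈ G. If the ideal (q, P + σ(P)) is prime and q, q' each have slice rank greater than 2·dim(P + σ(P)), then there exists c(σ) ∈ E* such that either σ(q) ≡ c(σ)·q and σ(q') ≡ c(σ)^{-1}·q' mod (P + σ(P)), or σ(q) ≡ c(σ)·q' and σ(q') ≡ c(σ)^{-1}·q mod (P + σ(P)). -/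
open MvPolynomial

/-- `SliceRankLE f r`: the polynomial `f` lies in an ideal generated by `r` linear forms. -/
def SliceRankLE {k : Type*} [Field k] {n : ℕ} (f : MvPolynomial (Fin n) k) (r : ℕ) : Prop :=
  ∃ l : Fin r → MvPolynomial (Fin n) k,
    (∀ i, (l i).IsHomogeneous 1) ∧ f ∈ Ideal.span (Set.range l)

/-- The slice rank: the minimal number of linear forms whose generated ideal contains `f`. -/
noncomputable def srk {k : Type*} [Field k] {n : ℕ} (f : MvPolynomial (Fin n) k) : ℕ :=
  sInf {r | SliceRankLE f r}

/-- The symmetric matrix associated to a quadratic form (characteristic ≠ 2). -/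
noncomputable def assocMatrix {k : Type*} [Field k] {n : ℕ} (q : MvPolynomial (Fin n) k) :
    Matrix (Fin n) (Fin n) k :=
  fun i j => if i = j then q.coeff (Finsupp.single i 2)
  else (2 : k)⁻¹ * q.coeff (Finsupp.single i 1 + Finsupp.single j 1)

/-- The rank of a quadratic form: the rank of its associated symmetric matrix. -/
noncomputable def qrank {k : Type*} [Field k] {n : ℕ} (q : MvPolynomial (Fin n) k) : ℕ :=
  (assocMatrix q).rank

/-! The ideal `I = (P + σ(P))` is generated by linear forms, hence prime, and it contains neither
`q`, `σ(q)` nor `σ(q')` because of the slice rank bounds. Since `q q' ≡ σ(q) σ(q')` modulo `I`,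
the product `σ(q) σ(q')` lies in the prime ideal `(q) + I`, so one factor does; comparing degree-2
components it is `≡ c q` modulo `I` with `c ≠ 0`, and cancelling `q` modulo the prime `I` in
`q q' ≡ σ(q) σ(q')` gives the congruence for the other factor. -/

theorem Ideal.sub_inv_smul_mem_of_mul_sub_mul_mem {K A : Type*} [Field K] [CommRing A]
    [Algebra K A] {I : Ideal A} [I.IsPrime] {a b a' b' : A} {c : K} (hc : c ≠ 0) (ha : a ∉ I)
    (hab : a * b - a' * b' ∈ I) (ha' : a' - c • a ∈ I) : b' - c⁻¹ • b ∈ I := by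
  have hb : a * (b - c • b') ∈ I := by
    have : a * (b - c • b') = (a * b - a' * b') + (a' - c • a) * b' := by
      simp only [Algebra.smul_def]; ring
    exact this ▸ I.add_mem hab (I.mul_mem_right _ ha')
  have : b' - c⁻¹ • b = -c⁻¹ • (b - c • b') := by
    rw [smul_sub, smul_smul, neg_mul, inv_mul_cancel₀ hc, neg_smul, neg_smul, one_smul]; abel
  rw [this, Algebra.smul_def]
  exact I.mul_mem_left _ ((Ideal.IsPrime.mem_or_mem ‹_› hb).resolve_left ha)

namespace MvPolynomial

section Graded

variable {ι R : Type*} [CommRing R]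

attribute [local instance] gradedAlgebra

theorem homogeneousComponent_add_mul_of_isHomogeneous {g : MvPolynomial ι R} {j : ℕ}
    (hg : g.IsHomogeneous j) (a : MvPolynomial ι R) (i : ℕ) :
    homogeneousComponent (i + j) (a * g) = homogeneousComponent i a * g := by
  rw [← decomposition.decompose'_apply, ← decomposition.decompose'_apply]
  exact DirectSum.coe_decompose_mul_add_of_right_mem _ ((mem_homogeneousSubmodule j g).2 hg)

theorem exists_sub_smul_mem_of_mem_span_singleton_sup {S : Set (MvPolynomial ι R)}
    (hS : ∀ s ∈ S, ∃ i, s.IsHomogeneous i) {f g : MvPolynomial ι R} {m : ℕ}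
    (hf : f.IsHomogeneous m) (hg : g.IsHomogeneous m) (h : f ∈ Ideal.span {g} ⊔ Ideal.span S) :
    ∃ c : R, f - c • g ∈ Ideal.span S := by
  obtain ⟨y, hy, z, hz, hfz⟩ := Submodule.mem_sup.1 h
  obtain ⟨a, rfl⟩ := Ideal.mem_span_singleton'.1 hy
  refine ⟨coeff 0 a, ?_⟩
  have : f = coeff 0 a • g + homogeneousComponent m z := by
    rw [← homogeneousComponent_eq_self hf, ← hfz, map_add, ← zero_add m,
      homogeneousComponent_add_mul_of_isHomogeneous hg, homogeneousComponent_zero,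
      smul_eq_C_mul]
  rw [this, add_sub_cancel_left]
  exact homogeneousComponent_mem_of_mem (Ideal.homogeneous_span _ S hS) hz m

end Graded

variable {ι K : Type*} [Field K]

/-- `Ideal.span S` is the kernel of the substitution `X i ↦ π (X i)`, where `π` projects
along `span K S` onto a complement, and this substitution takes values in a domain. -/
theorem isPrime_span_of_isHomogeneous_one {S : Set (MvPolynomial ι K)}
    (hS : ∀ s ∈ S, s.IsHomogeneous 1) : (Ideal.span S).IsPrime := by
  set W := Submodule.span K S
  obtain ⟨U, hWU⟩ := Submodule.exists_isCompl W
  set π := U.projection W hWU.symm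
  have hWI : W ≤ (Ideal.span S).restrictScalars K := Submodule.span_le.2 Ideal.subset_span
  have hsub_mem : ∀ x, x - π x ∈ W := fun x => by
    rw [← Submodule.projection_eq_self_sub_projection]
    exact Submodule.projection_apply_mem _ _
  set Φ : MvPolynomial ι K →ₐ[K] MvPolynomial ι K := aeval fun i => π (X i)
  have hΦ_linear : ∀ l, l.IsHomogeneous 1 → Φ l = π l := fun l hl =>
    LinearMap.eqOn_span (f := Φ.toLinearMap) (g := π) (by rintro _ ⟨i, rfl⟩; simp [Φ])
      (homogeneousSubmodule_one_eq_span_X (σ := ι) (R := K) ▸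
        (mem_homogeneousSubmodule 1 l).2 hl)
  have hsub_Φ : ∀ p, p - Φ p ∈ Ideal.span S := by
    intro p
    induction p using MvPolynomial.induction_on with
    | C a => simp [Φ]
    | add p p' hp hp' => simpa [add_sub_add_comm] using Ideal.add_mem _ hp hp'
    | mul_X p i hp =>
      have : p * X i - Φ (p * X i) = (p - Φ p) * X i + Φ p * (X i - π (X i)) := by
        simp only [Φ, map_mul, aeval_X]; ring
      rw [this]
      exact Ideal.add_mem _ (Ideal.mul_mem_right _ _ hp)
        (Ideal.mul_mem_left _ _ (hWI (hsub_mem _)))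
  have hker : Ideal.span S = RingHom.ker Φ := by
    refine le_antisymm (Ideal.span_le.2 fun s hs => ?_) fun p hp => ?_
    · show Φ s = 0
      rw [hΦ_linear s (hS s hs), Submodule.projection_apply_eq_zero_iff]
      exact Submodule.subset_span hs
    · simpa [RingHom.mem_ker.1 hp] using hsub_Φ p
  rw [hker]
  exact RingHom.ker_isPrime _

theorem exists_twist_of_mem_span_singleton_sup {S : Set (MvPolynomial ι K)}
    (hS : ∀ s ∈ S, s.IsHomogeneous 1) {a b a' b' : MvPolynomial ι K} {m : ℕ}
    (ha : a.IsHomogeneous m) (ha' : a'.IsHomogeneous m) (haS : a ∉ Ideal.span S)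
    (ha'S : a' ∉ Ideal.span S) (hab : a * b - a' * b' ∈ Ideal.span S)
    (ha'_mem : a' ∈ Ideal.span {a} ⊔ Ideal.span S) :
    ∃ c : K, c ≠ 0 ∧ a' - c • a ∈ Ideal.span S ∧ b' - c⁻¹ • b ∈ Ideal.span S := by
  have := isPrime_span_of_isHomogeneous_one hS
  obtain ⟨c, hc⟩ := exists_sub_smul_mem_of_mem_span_singleton_sup
    (fun s hs => ⟨1, hS s hs⟩) ha' ha ha'_mem
  have hc0 : c ≠ 0 := by
    rintro rfl
    exact ha'S (by simpa using hc)
  exact ⟨c, hc0, hc, Ideal.sub_inv_smul_mem_of_mul_sub_mul_mem hc0 haS hab hc⟩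

end MvPolynomial

section SliceRank

variable {K : Type*} [Field K] {n : ℕ}

theorem SliceRankLE.mono {f : MvPolynomial (Fin n) K} {r r' : ℕ} (hf : SliceRankLE f r)
    (h : r ≤ r') : SliceRankLE f r' := by
  obtain ⟨l, hl, hmem⟩ := hf
  refine ⟨fun i => if hi : (i : ℕ) < r then l ⟨i, hi⟩ else 0, fun i => ?_, ?_⟩
  · dsimp only
    split
    · exact hl _
    · exact isHomogeneous_zero _ _ _
  · refine Ideal.span_mono ?_ hmem
    rintro _ ⟨j, rfl⟩
    exact ⟨Fin.castLE h j, by simp [j.isLt]⟩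

theorem SliceRankLE.of_map (τ : K ≃+* K) {f : MvPolynomial (Fin n) K} {r : ℕ}
    (hf : SliceRankLE (map (τ : K →+* K) f) r) : SliceRankLE f r := by
  obtain ⟨l, hl, hmem⟩ := hf
  refine ⟨fun i => map (τ.symm : K →+* K) (l i), fun i => (hl i).map _, ?_⟩
  have := Ideal.mem_map_of_mem (map (τ.symm : K →+* K)) hmem
  rwa [Ideal.map_span, ← Set.range_comp, map_map, RingEquiv.symm_comp,
    map_id] at this

theorem sliceRankLE_finrank_of_mem_span {S : Set (MvPolynomial (Fin n) K)}
    (hS : ∀ s ∈ S, s.IsHomogeneous 1) (hS_fin : S.Finite) {f : MvPolynomial (Fin n) K}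
    (hf : f ∈ Ideal.span S) : SliceRankLE f (Module.finrank K (Submodule.span K S)) := by
  have := FiniteDimensional.span_of_finite K hS_fin
  set b := Module.finBasis K (Submodule.span K S)
  have hspan : Submodule.span K S =
      Submodule.span K (Set.range fun i => (b i : MvPolynomial (Fin n) K)) := by
    conv_lhs => rw [← Submodule.map_subtype_top (Submodule.span K S), ← b.span_eq,
      Submodule.map_span, ← Set.range_comp]
    rfl
  refine ⟨fun i => b i, fun i => ?_, Ideal.span_le.2 (fun s hs => ?_) hf⟩
  · have hle : Submodule.span K S ≤ homogeneousSubmodule (Fin n) K 1 :=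
      Submodule.span_le.2 fun s hs => (mem_homogeneousSubmodule 1 s).2 (hS s hs)
    exact hle (b i).2
  · have hle : Submodule.span K (Set.range fun i => (b i : MvPolynomial (Fin n) K)) ≤
        (Ideal.span (Set.range fun i => (b i : MvPolynomial (Fin n) K))).restrictScalars K :=
      Submodule.span_le.2 Ideal.subset_span
    exact hle (hspan ▸ Submodule.subset_span hs)

end SliceRank

theorem galois_twist_of_quadric_factors_general {k E : Type*} [Field k] [Field E] [Algebra k E]
    (σ : E ≃ₐ[k] E) {n p : ℕ} (q q' : MvPolynomial (Fin n) E)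
    (hq : q.IsHomogeneous 2) (hq' : q'.IsHomogeneous 2)
    (P : Fin p → MvPolynomial (Fin n) E) (hP : ∀ i, (P i).IsHomogeneous 1)
    (hcong : q * q' - MvPolynomial.map (σ : E →+* E) q * MvPolynomial.map (σ : E →+* E) q'
      ∈ Ideal.span (Set.range P ∪ Set.range (fun i => MvPolynomial.map (σ : E →+* E) (P i))))
    (hprime : (Ideal.span ({q} ∪ Set.range P ∪
      Set.range (fun i => MvPolynomial.map (σ : E →+* E) (P i)))).IsPrime)
    (hsrkq : ¬ SliceRankLE q (2 * Module.finrank E (Submodule.span E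
      (Set.range P ∪ Set.range (fun i => MvPolynomial.map (σ : E →+* E) (P i))))))
    (hsrkq' : ¬ SliceRankLE q' (2 * Module.finrank E (Submodule.span E
      (Set.range P ∪ Set.range (fun i => MvPolynomial.map (σ : E →+* E) (P i)))))) :
    ∃ c : E, c ≠ 0 ∧
      (let I := Ideal.span (Set.range P ∪
        Set.range (fun i => MvPolynomial.map (σ : E →+* E) (P i)));
      (MvPolynomial.map (σ : E →+* E) q - c • q ∈ I ∧
        MvPolynomial.map (σ : E →+* E) q' - c⁻¹ • q' ∈ I) ∨
      (MvPolynomial.map (σ : E →+* E) q - c • q' ∈ I ∧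
        MvPolynomial.map (σ : E →+* E) q' - c⁻¹ • q ∈ I)) := by
  set S := Set.range P ∪ Set.range fun i => map (σ : E →+* E) (P i)
  have hS : ∀ s ∈ S, s.IsHomogeneous 1 := by
    rintro _ (⟨i, rfl⟩ | ⟨i, rfl⟩)
    exacts [hP i, (hP i).map _]
  have hS_fin : S.Finite := (Set.finite_range _).union (Set.finite_range _)
  have hsrk_of_mem : ∀ f, f ∈ Ideal.span S →
      SliceRankLE f (2 * Module.finrank E (Submodule.span E S)) :=
    fun f hf => (sliceRankLE_finrank_of_mem_span hS hS_fin hf).mono (by omega)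
  have hsrk_of_map_mem : ∀ f, map (σ : E →+* E) f ∈ Ideal.span S →
      SliceRankLE f (2 * Module.finrank E (Submodule.span E S)) :=
    fun f hf => (hsrk_of_mem _ hf).of_map (σ : E ≃+* E)
  have hprime' : (Ideal.span {q} ⊔ Ideal.span S).IsPrime := by
    rwa [Set.union_assoc, Ideal.span_union] at hprime
  have hmem : map (σ : E →+* E) q * map (σ : E →+* E) q' ∈ Ideal.span {q} ⊔ Ideal.span S := by
    have hqq' : q * q' ∈ Ideal.span {q} ⊔ Ideal.span S :=
      Submodule.mem_sup_left (Ideal.mul_mem_right _ _ (Ideal.mem_span_singleton_self q))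
    simpa using sub_mem hqq' (Submodule.mem_sup_right hcong)
  rcases hprime'.mem_or_mem hmem with h | h
  · obtain ⟨c, hc0, hσq, hσq'⟩ := exists_twist_of_mem_span_singleton_sup hS hq (hq.map _)
      (fun h => hsrkq (hsrk_of_mem q h)) (fun h => hsrkq (hsrk_of_map_mem q h)) hcong h
    exact ⟨c, hc0, .inl ⟨hσq, hσq'⟩⟩
  · obtain ⟨c, hc0, hσq', hσq⟩ := exists_twist_of_mem_span_singleton_sup hS hq (hq'.map _)
      (fun h => hsrkq (hsrk_of_mem q h)) (fun h => hsrkq' (hsrk_of_map_mem q' h))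
      (by rwa [mul_comm (map (σ : E →+* E) q')]) h
    exact ⟨c⁻¹, inv_ne_zero hc0, .inr ⟨hσq, by rwa [inv_inv]⟩⟩

/-- Let `E/k` be Galois, `σ` in the Galois group, `q, q'` quadrics over `E` and `P` a
space of linear forms such that `q q' ≡ σ(q) σ(q') mod (P + σ(P))`.  If the ideal
`(q, P + σ(P))` is prime and `q, q'` each have slice rank greater than
`2 · dim(P + σ(P))`, then there is `c ∈ E*` with either
`σ(q) ≡ c q, σ(q') ≡ c⁻¹ q'` or `σ(q) ≡ c q', σ(q') ≡ c⁻¹ q` modulo `(P + σ(P))`. -/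
theorem galois_twist_of_quadric_factors {k E : Type*} [Field k] [Field E] [Algebra k E]
    [FiniteDimensional k E] [IsGalois k E] (hchar : ringChar E ≠ 2)
    (σ : E ≃ₐ[k] E) {n p : ℕ} (q q' : MvPolynomial (Fin n) E)
    (hq : q.IsHomogeneous 2) (hq' : q'.IsHomogeneous 2)
    (P : Fin p → MvPolynomial (Fin n) E) (hP : ∀ i, (P i).IsHomogeneous 1)
    (hcong : q * q' - MvPolynomial.map (σ : E →+* E) q * MvPolynomial.map (σ : E →+* E) q'
      ∈ Ideal.span (Set.range P ∪ Set.range (fun i => MvPolynomial.map (σ : E →+* E) (P i))))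
    (hprime : (Ideal.span ({q} ∪ Set.range P ∪
      Set.range (fun i => MvPolynomial.map (σ : E →+* E) (P i)))).IsPrime)
    (hsrkq : ¬ SliceRankLE q (2 * Module.finrank E (Submodule.span E
      (Set.range P ∪ Set.range (fun i => MvPolynomial.map (σ : E →+* E) (P i))))))
    (hsrkq' : ¬ SliceRankLE q' (2 * Module.finrank E (Submodule.span E
      (Set.range P ∪ Set.range (fun i => MvPolynomial.map (σ : E →+* E) (P i)))))) :
    ∃ c : E, c ≠ 0 ∧
      (let I := Ideal.span (Set.range P ∪
        Set.range (fun i => MvPolynomial.map (σ : E →+* E) (P i)));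
      (MvPolynomial.map (σ : E →+* E) q - c • q ∈ I ∧
        MvPolynomial.map (σ : E →+* E) q' - c⁻¹ • q' ∈ I) ∨
      (MvPolynomial.map (σ : E →+* E) q - c • q' ∈ I ∧
        MvPolynomial.map (σ : E →+* E) q' - c⁻¹ • q ∈ I)) :=
  galois_twist_of_quadric_factors_general σ q q' hq hq' P hP hcong hprime hsrkq hsrkq'
end
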